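/- arXiv:2501.15692 — 4 statements merged into one kernel-verified Lean document; each statement's English description precedes it below -/
import Mathlib

section
/- For every nonempty subset J of {1,…,K} with |J| ≤ K−1, the submatrix [B₂]_J consisting of the rows of B₂ indexed by J has rank |J|. -/
open Matrix

lemma ker_eq_span_one (n : ℕ) (B₂ : Matrix (Fin (n+1)) (Fin n) ℝ)
    (horth : B₂ᵀ * B₂ = 1)
    (hone : B₂ᵀ *ᵥ (fun _ => (1:ℝ)) = 0) :
    LinearMap.ker (B₂ᵀ.mulVecLin) = Submodule.span ℝ {(fun _ => (1:ℝ) : Fin (n+1) → ℝ)} := by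
  have hrank_ge : n ≤ B₂ᵀ.rank := by
    have h1 : (B₂ᵀ * B₂).rank ≤ B₂ᵀ.rank := Matrix.rank_mul_le_left _ _
    rwa [horth, Matrix.rank_one, Fintype.card_fin] at h1
  have hrank_le : B₂ᵀ.rank ≤ n := by
    simpa using Matrix.rank_le_card_height B₂ᵀ
  have hrank : B₂ᵀ.rank = n := le_antisymm hrank_le hrank_ge
  have hrn := LinearMap.finrank_range_add_finrank_ker (B₂ᵀ.mulVecLin)
  rw [Module.finrank_pi ℝ] at hrn
  have hker : Module.finrank ℝ (LinearMap.ker B₂ᵀ.mulVecLin) = 1 := by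
    have : Matrix.rank B₂ᵀ = Module.finrank ℝ (LinearMap.range B₂ᵀ.mulVecLin) := rfl
    simp only [Fintype.card_fin] at hrn
    omega
  have hone_ne : (fun _ => (1:ℝ) : Fin (n+1) → ℝ) ≠ 0 := by
    intro h
    have := congrFun h 0
    norm_num at this
  have hle : Submodule.span ℝ {(fun _ => (1:ℝ) : Fin (n+1) → ℝ)} ≤
      LinearMap.ker (B₂ᵀ.mulVecLin) := by
    rw [Submodule.span_singleton_le_iff_mem]
    exact hone
  symm
  apply Submodule.eq_of_le_of_finrank_eq hle
  rw [hker, finrank_span_singleton hone_ne]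

/-- Every nonempty J with |J| ≤ K−1 gives rows [B₂]_J of rank |J|. -/
theorem stmt3 (n : ℕ) (hn : 1 ≤ n)
    (B₂ : Matrix (Fin (n+1)) (Fin n) ℝ)
    (horth : B₂ᵀ * B₂ = 1)
    (hone : B₂ᵀ *ᵥ (fun _ => (1:ℝ)) = 0)
    (J : Finset (Fin (n+1))) (hJne : J.Nonempty) (hJcard : J.card ≤ n) :
    (B₂.submatrix (fun j : J => (j : Fin (n+1))) id).rank = J.card := by
  classical
  set M := B₂.submatrix (fun j : J => (j : Fin (n+1))) id with hM
  rw [← Matrix.rank_transpose M]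
  have hinj : Function.Injective (Mᵀ.mulVecLin) := by
    rw [← LinearMap.ker_eq_bot]
    rw [Submodule.eq_bot_iff]
    intro c hc
    have hc' : Mᵀ *ᵥ c = 0 := hc
    -- extend c by zero
    set v : Fin (n+1) → ℝ := fun k => if h : k ∈ J then c ⟨k, h⟩ else 0 with hv
    have hext : B₂ᵀ *ᵥ v = Mᵀ *ᵥ c := by
      funext i
      simp only [Matrix.mulVec, dotProduct, hv, hM, Matrix.transpose_apply,
        Matrix.submatrix_apply, id]
      rw [← Finset.sum_subset (Finset.subset_univ J)
        (fun x _ hx => by simp [hx])]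
      rw [← Finset.sum_attach J (fun k => B₂ k i * if h : k ∈ J then c ⟨k, h⟩ else 0)]
      refine Finset.sum_congr rfl fun x _ => ?_
      rw [dif_pos x.2]
    have hvker : v ∈ LinearMap.ker (B₂ᵀ.mulVecLin) := by
      show B₂ᵀ *ᵥ v = 0
      rw [hext, hc']
    rw [ker_eq_span_one n B₂ horth hone, Submodule.mem_span_singleton] at hvker
    obtain ⟨a, ha⟩ := hvker
    -- there exists k ∉ J
    have hcompl : Jᶜ.Nonempty := by
      rw [← Finset.card_pos, Finset.card_compl, Fintype.card_fin]
      omega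
    obtain ⟨k, hk⟩ := hcompl
    have hk' : k ∉ J := Finset.mem_compl.mp hk
    have hvk : v k = 0 := by simp [hv, hk']
    have ha0 : a = 0 := by
      have := congrFun ha k
      simp only [Pi.smul_apply, smul_eq_mul, mul_one] at this
      rw [hvk] at this; linarith
    have hv0 : v = 0 := by rw [← ha, ha0, zero_smul]
    funext j
    have : v (j : Fin (n+1)) = 0 := congrFun hv0 _
    simpa [hv, j.2] using this
  have := LinearMap.finrank_range_of_inj hinj
  rw [Matrix.rank, this, Module.finrank_pi ℝ]
  simp
end

section
/- If |J| = K−1 (where J ⊂ {1,…,K}), then the subspace L_J(Ω) = {x ∈ ℝ^{K−1} : [B₂Ω⁻¹x]_J = 0} equals {0}. -/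
open Matrix

/-- If |J| = K−1 then L_J(Ω) = {0}. -/
theorem stmt5 (n : ℕ) (hn : 1 ≤ n)
    (B₂ : Matrix (Fin (n+1)) (Fin n) ℝ)
    (horth : B₂ᵀ * B₂ = 1)
    (hone : B₂ᵀ *ᵥ (fun _ => (1:ℝ)) = 0)
    (Ω : Matrix (Fin n) (Fin n) ℝ) (hΩ : Ω.PosDef)
    (J : Finset (Fin (n+1))) (hJcard : J.card = n) :
    {x : Fin n → ℝ | ∀ j ∈ J, ((B₂ * Ω⁻¹) *ᵥ x) j = 0} = {0} := by
  ext x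
  simp only [Set.mem_setOf_eq, Set.mem_singleton_iff]
  constructor
  · intro hx
    set y : Fin n → ℝ := Ω⁻¹ *ᵥ x with hy
    set v : Fin (n+1) → ℝ := B₂ *ᵥ y with hv
    have hvx : ∀ j ∈ J, v j = 0 := by
      intro j hj
      have := hx j hj
      rwa [← mulVec_mulVec] at this
    -- sum of entries of v is 0
    have hsum : ∑ i, v i = 0 := by
      have h1 : ∑ i, v i = (fun _ => (1:ℝ)) ⬝ᵥ v := by
        simp [dotProduct]
      rw [h1, hv, dotProduct_mulVec, ← mulVec_transpose, hone]
      simp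
    -- v = 0
    have hv0 : v = 0 := by
      funext i
      by_cases hi : i ∈ J
      · exact hvx i hi
      · -- i is the unique element outside J
        have hcompl : Jᶜ = {i} := by
          have hc1 : Jᶜ.card = 1 := by
            rw [Finset.card_compl, hJcard, Fintype.card_fin]
            omega
          obtain ⟨a, ha⟩ := Finset.card_eq_one.mp hc1
          have hia : i ∈ Jᶜ := Finset.mem_compl.mpr hi
          rw [ha] at hia ⊢
          simp only [Finset.mem_singleton] at hia
          rw [hia]
        have hsplit := Finset.sum_add_sum_compl J v
        rw [hcompl, Finset.sum_singleton, Finset.sum_eq_zero hvx, zero_add, hsum] at hsplit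
        simpa using hsplit
    -- then y = 0
    have hy0 : y = 0 := by
      have : B₂ᵀ *ᵥ v = y := by
        rw [hv, mulVec_mulVec, horth, one_mulVec]
      rw [hv0] at this
      simp at this
      exact this.symm
    -- then x = 0
    have hΩdet : IsUnit Ω.det := isUnit_iff_ne_zero.mpr (ne_of_gt hΩ.det_pos)
    have : Ω *ᵥ y = x := by
      rw [hy, mulVec_mulVec, mul_nonsing_inv Ω hΩdet, one_mulVec]
    rw [hy0] at this
    simpa using this.symm
  · rintro rfl
    intro j hj
    simp
end

section
/- The polar cone of Λ(w) := {B₂'λ : λ ∈ ℝ^K, λ ≥ 0, w'λ = 0} with respect to the inner product ⟨x,y⟩_Ω = x'Ω⁻¹y equals Λ°(w,Ω) = {x ∈ ℝ^{K−1} : [B₂Ω⁻¹x]_j ≤ 0 for all j with w_j = 0}. -/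
open Matrix

lemma key (n : ℕ) (B₂ : Matrix (Fin (n+1)) (Fin n) ℝ)
    (Ω : Matrix (Fin n) (Fin n) ℝ) (hΩ : Ω.PosDef)
    (x : Fin n → ℝ) (l : Fin (n+1) → ℝ) :
    x ⬝ᵥ (Ω⁻¹ *ᵥ (B₂ᵀ *ᵥ l)) = ((B₂ * Ω⁻¹) *ᵥ x) ⬝ᵥ l := by
  have hΩs : Ωᵀ = Ω := hΩ.isHermitian.eq
  have hsym : Ω⁻¹ᵀ = Ω⁻¹ := by rw [transpose_nonsing_inv, hΩs]
  rw [mulVec_mulVec, dotProduct_mulVec, ← mulVec_transpose, transpose_mul,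
    transpose_transpose, hsym]

/-- The Ω-polar cone of Λ(w) = {B₂'λ : λ ≥ 0, w'λ = 0} is
    {x : [B₂Ω⁻¹x]_j ≤ 0 for all j with w_j = 0}. -/
theorem stmt6 (n : ℕ) (hn : 1 ≤ n)
    (B₂ : Matrix (Fin (n+1)) (Fin n) ℝ)
    (horth : B₂ᵀ * B₂ = 1)
    (hone : B₂ᵀ *ᵥ (fun _ => (1:ℝ)) = 0)
    (Ω : Matrix (Fin n) (Fin n) ℝ) (hΩ : Ω.PosDef)
    (w : Fin (n+1) → ℝ) (hw : (∀ j, 0 ≤ w j) ∧ ∑ j, w j = 1) :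
    {x : Fin n → ℝ |
        ∀ c ∈ {y : Fin n → ℝ | ∃ l : Fin (n+1) → ℝ,
            (∀ j, 0 ≤ l j) ∧ w ⬝ᵥ l = 0 ∧ y = B₂ᵀ *ᵥ l},
          x ⬝ᵥ (Ω⁻¹ *ᵥ c) ≤ 0}
      = {x : Fin n → ℝ | ∀ j, w j = 0 → ((B₂ * Ω⁻¹) *ᵥ x) j ≤ 0} := by
  ext x
  simp only [Set.mem_setOf_eq]
  constructor
  · intro h j hj
    have := h (B₂ᵀ *ᵥ (Pi.single j 1))
      ⟨Pi.single j 1, by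
        intro k
        by_cases hk : k = j <;> simp [hk, Pi.single_apply],
        by simp [dotProduct, Pi.single_apply, hj], rfl⟩
    rw [key n B₂ Ω hΩ] at this
    simpa [dotProduct, Pi.single_apply] using this
  · rintro h c ⟨l, hl, hwl, rfl⟩
    rw [key n B₂ Ω hΩ]
    have hz : ∀ j, w j * l j = 0 := by
      intro j
      have := (Finset.sum_eq_zero_iff_of_nonneg (fun i _ =>
        mul_nonneg (hw.1 i) (hl i))).mp hwl j (Finset.mem_univ j)
      exact this
    apply Finset.sum_nonpos
    intro j _
    rcases eq_or_lt_of_le (hl j) with h0 | hpos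
    · simp [← h0]
    · have hwj : w j = 0 := by
        have := hz j
        rcases mul_eq_zero.mp this with h1 | h1
        · exact h1
        · exact absurd h1 (ne_of_gt hpos)
      exact mul_nonpos_of_nonpos_of_nonneg (h j hwj) (hl j)
end

section
/- If Y ∈ ℝ^{K−1} is a nondegenerate Gaussian random vector (with positive definite covariance Ω) and J ⊂ {1,…,K} satisfies |J| < K−1, then almost surely the vector M·Π_Ω(Y + μ | L_J(Ω)) has exactly |J| zero coordinates, simultaneously for all μ in ℚ^{K−1} (where M = B₂Ω⁻¹). -/
open Matrix MeasureTheory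

/-!
Minimality forces `v - Π v` to be `Ω⁻¹`-orthogonal to `L_J`, so `Π` is linear and fixes `L_J`.
Each coordinate `j ∉ J` of `M Π(y)` is therefore a linear functional `ℓ_j` of `y`, and `ℓ_j ≠ 0`:
pick `l ∉ J ∪ {j}` (possible as `|J| < K - 1`); then `e_j - e_l ⊥ 𝟙` lies in the range of `B₂`,
say `e_j - e_l = B₂ u`, and `Ω u ∈ L_J` has `ℓ_j(Ω u) = 1`. So for each of the countably many
pairs `(j, μ)` the event `ℓ_j(Y + μ) = 0` puts `Y` on an affine hyperplane, which is Lebesgue-null,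
and the law of `Y` has a density. The coordinates in `J` vanish since `Π` maps into `L_J`.
-/

lemma eq_zero_of_forall_sq_mul_sub_two_mul_nonneg {a b : ℝ} (hb : 0 ≤ b)
    (h : ∀ t : ℝ, 0 ≤ t ^ 2 * b - 2 * t * a) : a = 0 := by
  have key := h (a / (b + 1))
  have hb1 : 0 < b + 1 := by linarith
  have : (a / (b + 1)) ^ 2 * b - 2 * (a / (b + 1)) * a = -(a ^ 2 * (b + 2)) / (b + 1) ^ 2 := by
    field_simp; ring
  rw [this] at key
  have : a ^ 2 * (b + 2) ≤ 0 := by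
    rcases div_nonneg_iff.mp key with ⟨h1, _⟩ | ⟨_, h2⟩
    · linarith
    · nlinarith [sq_nonneg (b + 1)]
  nlinarith [sq_nonneg a]

namespace Matrix

variable {m : Type*} [Fintype m]

def zeroOn {k : Type*} (M : Matrix k m ℝ) (J : Set k) : Submodule ℝ (m → ℝ) where
  carrier := {z | ∀ j ∈ J, (M *ᵥ z) j = 0}
  add_mem' hx hy j hj := by simp [mulVec_add, hx j hj, hy j hj]
  zero_mem' j _ := by simp
  smul_mem' c x hx j hj := by simp [mulVec_smul, hx j hj]

lemma setOf_mulVec_eq_zero_eq {k : Type*} {M : Matrix k m ℝ} {J : Finset k} {x : m → ℝ}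
    (hx : x ∈ zeroOn M J) (h : ∀ j ∉ J, (M *ᵥ x) j ≠ 0) : {j | (M *ᵥ x) j = 0} = J :=
  Set.ext fun j ↦ ⟨fun h0 ↦ by_contra fun hj ↦ h j hj h0, hx j⟩

lemma PosSemidef.dotProduct_mulVec_comm {A : Matrix m m ℝ} (hA : A.PosSemidef) (x y : m → ℝ) :
    x ⬝ᵥ (A *ᵥ y) = y ⬝ᵥ (A *ᵥ x) := by
  rw [dotProduct_mulVec, ← mulVec_transpose, (isHermitian_iff_isSymm.mp hA.isHermitian).eq,
    dotProduct_comm]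

def IsQuadMinimizer (A : Matrix m m ℝ) (S : Submodule ℝ (m → ℝ)) (p : (m → ℝ) → m → ℝ) : Prop :=
  ∀ v, p v ∈ S ∧ ∀ z ∈ S, (v - p v) ⬝ᵥ (A *ᵥ (v - p v)) ≤ (v - z) ⬝ᵥ (A *ᵥ (v - z))

namespace IsQuadMinimizer

variable {A : Matrix m m ℝ} {S : Submodule ℝ (m → ℝ)} {p : (m → ℝ) → m → ℝ}

lemma mem (hp : IsQuadMinimizer A S p) (v : m → ℝ) : p v ∈ S := (hp v).1

lemma sub_dotProduct_mulVec_eq_zero (hp : IsQuadMinimizer A S p) (hA : A.PosSemidef)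
    (v : m → ℝ) {w : m → ℝ} (hw : w ∈ S) : (v - p v) ⬝ᵥ (A *ᵥ w) = 0 := by
  refine eq_zero_of_forall_sq_mul_sub_two_mul_nonneg
    (by simpa using hA.dotProduct_mulVec_nonneg w) fun t ↦ ?_
  have hle := (hp v).2 (p v + t • w) (S.add_mem (hp.mem v) (S.smul_mem t hw))
  rw [show v - (p v + t • w) = (v - p v) - t • w by abel] at hle
  generalize v - p v = r at hle ⊢
  have hexpand : (r - t • w) ⬝ᵥ (A *ᵥ (r - t • w))
      = r ⬝ᵥ (A *ᵥ r) - 2 * t * (r ⬝ᵥ (A *ᵥ w)) + t ^ 2 * (w ⬝ᵥ (A *ᵥ w)) := by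
    simp only [mulVec_sub, mulVec_smul, dotProduct_sub, sub_dotProduct, dotProduct_smul,
      smul_dotProduct, smul_eq_mul, hA.dotProduct_mulVec_comm w r]
    ring
  linarith

lemma eq_of_forall_dotProduct_eq_zero (hp : IsQuadMinimizer A S p) (hA : A.PosDef)
    {v z : m → ℝ} (hz : z ∈ S) (hperp : ∀ w ∈ S, (v - z) ⬝ᵥ (A *ᵥ w) = 0) : p v = z := by
  have hmem : p v - z ∈ S := S.sub_mem (hp.mem v) hz
  have hzero : (p v - z) ⬝ᵥ (A *ᵥ (p v - z)) = 0 := by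
    calc (p v - z) ⬝ᵥ (A *ᵥ (p v - z))
        = (v - z) ⬝ᵥ (A *ᵥ (p v - z)) - (v - p v) ⬝ᵥ (A *ᵥ (p v - z)) := by
          rw [← sub_dotProduct, sub_sub_sub_cancel_left]
      _ = 0 := by rw [hperp _ hmem, hp.sub_dotProduct_mulVec_eq_zero hA.posSemidef v hmem, sub_zero]
  by_contra hne
  exact (hA.dotProduct_mulVec_pos (sub_ne_zero.mpr hne)).ne' (by simpa using hzero)

lemma apply_eq_self (hp : IsQuadMinimizer A S p) (hA : A.PosDef) {v : m → ℝ} (hv : v ∈ S) :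
    p v = v :=
  hp.eq_of_forall_dotProduct_eq_zero hA hv fun w _ ↦ by simp

def toLinearMap (hp : IsQuadMinimizer A S p) (hA : A.PosDef) : (m → ℝ) →ₗ[ℝ] m → ℝ where
  toFun := p
  map_add' v w := hp.eq_of_forall_dotProduct_eq_zero hA (S.add_mem (hp.mem v) (hp.mem w))
    fun x hx ↦ by
      rw [show v + w - (p v + p w) = (v - p v) + (w - p w) by abel, add_dotProduct,
        hp.sub_dotProduct_mulVec_eq_zero hA.posSemidef v hx,
        hp.sub_dotProduct_mulVec_eq_zero hA.posSemidef w hx, add_zero]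
  map_smul' t v := hp.eq_of_forall_dotProduct_eq_zero hA (S.smul_mem t (hp.mem v))
    fun x hx ↦ by
      rw [RingHom.id_apply, ← smul_sub, smul_dotProduct,
        hp.sub_dotProduct_mulVec_eq_zero hA.posSemidef v hx, smul_zero]

@[simp]
lemma toLinearMap_apply (hp : IsQuadMinimizer A S p) (hA : A.PosDef) (v : m → ℝ) :
    hp.toLinearMap hA v = p v := rfl

end IsQuadMinimizer

variable [DecidableEq m] {k : Type*} [Fintype k] {B : Matrix k m ℝ}

lemma ker_mulVecLin_transpose_eq_span (hB : Bᵀ * B = 1)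
    (hcard : Fintype.card k = Fintype.card m + 1) {c : k → ℝ} (hc : Bᵀ *ᵥ c = 0) (hc0 : c ≠ 0) :
    LinearMap.ker (mulVecLin Bᵀ) = ℝ ∙ c := by
  have hsurj : LinearMap.range (mulVecLin Bᵀ) = ⊤ :=
    LinearMap.range_eq_top.mpr fun y ↦
      ⟨B *ᵥ y, by rw [mulVecLin_apply, mulVec_mulVec, hB, one_mulVec]⟩
  have hrank := LinearMap.finrank_range_add_finrank_ker (mulVecLin Bᵀ)
  rw [hsurj, finrank_top] at hrank
  simp only [Module.finrank_fintype_fun_eq_card, hcard] at hrank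
  refine (Submodule.eq_of_le_of_finrank_eq ?_ ?_).symm
  · rwa [Submodule.span_le, Set.singleton_subset_iff, SetLike.mem_coe, LinearMap.mem_ker,
      mulVecLin_apply]
  · rw [finrank_span_singleton hc0]; omega

lemma mulVec_transpose_mulVec_of_dotProduct_eq_zero (hB : Bᵀ * B = 1)
    (hcard : Fintype.card k = Fintype.card m + 1) {c : k → ℝ} (hc : Bᵀ *ᵥ c = 0) (hc0 : c ≠ 0)
    {w : k → ℝ} (hw : w ⬝ᵥ c = 0) : B *ᵥ (Bᵀ *ᵥ w) = w := by
  have hker : w - B *ᵥ (Bᵀ *ᵥ w) ∈ LinearMap.ker (mulVecLin Bᵀ) := by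
    rw [LinearMap.mem_ker, mulVecLin_apply, mulVec_sub, mulVec_mulVec, hB, one_mulVec,
      sub_self]
  rw [ker_mulVecLin_transpose_eq_span hB hcard hc hc0, Submodule.mem_span_singleton] at hker
  obtain ⟨t, ht⟩ := hker
  have hBc : B *ᵥ (Bᵀ *ᵥ w) ⬝ᵥ c = 0 := by
    rw [dotProduct_comm, dotProduct_mulVec, ← mulVec_transpose, hc, zero_dotProduct]
  have ht0 : t * (c ⬝ᵥ c) = 0 := by
    rw [← smul_eq_mul, ← smul_dotProduct, ht, sub_dotProduct, hw, hBc, sub_zero]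
  have hcc : c ⬝ᵥ c ≠ 0 := by
    simpa using (dotProduct_self_eq_zero (v := c)).not.mpr hc0
  rw [(mul_eq_zero.mp ht0).resolve_right hcc, zero_smul, eq_comm, sub_eq_zero] at ht
  exact ht.symm

lemma exists_mulVec_eq_zero_on_ne_zero (hB : Bᵀ * B = 1)
    (hcard : Fintype.card k = Fintype.card m + 1) (hone : Bᵀ *ᵥ (fun _ ↦ (1 : ℝ)) = 0)
    {J : Finset k} (hJ : J.card < Fintype.card m) {j : k} (hj : j ∉ J) :
    ∃ u : m → ℝ, (∀ i ∈ J, (B *ᵥ u) i = 0) ∧ (B *ᵥ u) j ≠ 0 := by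
  classical
  obtain ⟨l, -, hl⟩ := Finset.exists_mem_notMem_of_card_lt_card (s := insert j J)
    (t := Finset.univ) (by have := J.card_insert_le j; rw [Finset.card_univ]; omega)
  have hlj : l ≠ j := fun h ↦ hl (h ▸ J.mem_insert_self l)
  have hlJ : l ∉ J := fun h ↦ hl (Finset.mem_insert_of_mem h)
  set w : k → ℝ := Pi.single j 1 - Pi.single l 1
  have hw : w ⬝ᵥ (fun _ ↦ (1 : ℝ)) = 0 := by simp [w, sub_dotProduct]
  have hone0 : (fun _ ↦ (1 : ℝ) : k → ℝ) ≠ 0 := fun h ↦ by simpa using congrFun h j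
  refine ⟨Bᵀ *ᵥ w, fun i hi ↦ ?_, ?_⟩ <;>
    rw [mulVec_transpose_mulVec_of_dotProduct_eq_zero hB hcard hone hone0 hw]
  · have hij : i ≠ j := fun h ↦ hj (h ▸ hi)
    have hil : i ≠ l := fun h ↦ hlJ (h ▸ hi)
    simp [w, hij, hil]
  · simp [w, hlj.symm]

lemma exists_mem_zeroOn_mul_inv_mulVec_ne_zero (hB : Bᵀ * B = 1)
    (hcard : Fintype.card k = Fintype.card m + 1) (hone : Bᵀ *ᵥ (fun _ ↦ (1 : ℝ)) = 0)
    {C : Matrix m m ℝ} (hC : IsUnit C.det) {J : Finset k} (hJ : J.card < Fintype.card m)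
    {j : k} (hj : j ∉ J) : ∃ v ∈ zeroOn (B * C⁻¹) J, ((B * C⁻¹) *ᵥ v) j ≠ 0 := by
  obtain ⟨u, hu, hu_j⟩ := exists_mulVec_eq_zero_on_ne_zero hB hcard hone hJ hj
  have hCu : (B * C⁻¹) *ᵥ (C *ᵥ u) = B *ᵥ u := by
    rw [mulVec_mulVec, Matrix.mul_assoc, nonsing_inv_mul _ hC, Matrix.mul_one]
  exact ⟨C *ᵥ u, fun i hi ↦ hCu ▸ hu i hi, hCu ▸ hu_j⟩

end Matrix

lemma Measure.addHaar_setOf_linearMap_eq {E : Type*} [NormedAddCommGroup E] [NormedSpace ℝ E]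
    [MeasurableSpace E] [BorelSpace E] [FiniteDimensional ℝ E] (μ : Measure E)
    [μ.IsAddHaarMeasure] {ℓ : E →ₗ[ℝ] ℝ} (hℓ : ℓ ≠ 0) (c : ℝ) : μ {x | ℓ x = c} = 0 := by
  obtain ⟨x, hx⟩ : ∃ x, ℓ x ≠ 0 := by
    by_contra! h
    exact hℓ (LinearMap.ext h)
  have hx₀ : ℓ ((c / ℓ x) • x) = c := by simp [hx]
  have hset : {y | ℓ y = c} = (· + -((c / ℓ x) • x)) ⁻¹' (LinearMap.ker ℓ : Set E) := by
    ext y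
    simp [LinearMap.mem_ker, sub_eq_zero, hx₀, ← sub_eq_add_neg]
  rw [hset, measure_preimage_add_right]
  exact Measure.addHaar_submodule μ _ fun htop ↦ hℓ (LinearMap.ker_eq_top.mp htop)

lemma ae_forall_linearMap_ne_of_absolutelyContinuous {Ω E ι : Type*} [Countable ι]
    [MeasurableSpace Ω] {P : Measure Ω} [NormedAddCommGroup E] [NormedSpace ℝ E]
    [MeasurableSpace E] [BorelSpace E] [FiniteDimensional ℝ E] {μ : Measure E}
    [μ.IsAddHaarMeasure] {Y : Ω → E} (hY : AEMeasurable Y P) (hac : P.map Y ≪ μ)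
    {ℓ : ι → E →ₗ[ℝ] ℝ} (hℓ : ∀ i, ℓ i ≠ 0) (c : ι → ℝ) :
    ∀ᵐ ω ∂P, ∀ i, ℓ i (Y ω) ≠ c i :=
  ae_all_iff.mpr fun i ↦ ae_of_ae_map hY <| hac.ae_le <|
    measure_eq_zero_iff_ae_notMem.mp (Measure.addHaar_setOf_linearMap_eq μ (hℓ i) (c i))

theorem stmt14_general (n : ℕ)
    (B₂ : Matrix (Fin (n+1)) (Fin n) ℝ)
    (horth : B₂ᵀ * B₂ = 1)
    (hone : B₂ᵀ *ᵥ (fun _ => (1:ℝ)) = 0)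
    (Ω : Matrix (Fin n) (Fin n) ℝ) (hΩ : Ω.PosDef)
    (J : Finset (Fin (n+1))) (hJ : J.card < n)
    {E : Type*} [MeasurableSpace E] (P : Measure E) [IsProbabilityMeasure P]
    (Y : E → Fin n → ℝ) (hY : Measurable Y)
    (hlaw : Measure.map Y P = volume.withDensity (fun v =>
        ENNReal.ofReal ((Real.sqrt ((2 * Real.pi) ^ n * Ω.det))⁻¹ *
          Real.exp (-(v ⬝ᵥ (Ω⁻¹ *ᵥ v)) / 2))))
    (proj : (Fin n → ℝ) → Fin n → ℝ)
    (hproj : ∀ v : Fin n → ℝ,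
        proj v ∈ {z : Fin n → ℝ | ∀ j ∈ J, ((B₂ * Ω⁻¹) *ᵥ z) j = 0} ∧
        ∀ z ∈ {z : Fin n → ℝ | ∀ j ∈ J, ((B₂ * Ω⁻¹) *ᵥ z) j = 0},
          (v - proj v) ⬝ᵥ (Ω⁻¹ *ᵥ (v - proj v)) ≤ (v - z) ⬝ᵥ (Ω⁻¹ *ᵥ (v - z))) :
    P {ω : E | ∀ μ : Fin n → ℚ,
        ({j : Fin (n+1) |
            ((B₂ * Ω⁻¹) *ᵥ proj (Y ω + fun i => (μ i : ℝ))) j = 0}).ncard = J.card} = 1 := by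
  set M := B₂ * Ω⁻¹
  have hmin : IsQuadMinimizer Ω⁻¹ (zeroOn M J) proj := hproj
  let ℓ (j : Fin (n+1)) : (Fin n → ℝ) →ₗ[ℝ] ℝ :=
    LinearMap.proj j ∘ₗ mulVecLin M ∘ₗ hmin.toLinearMap hΩ.inv
  have hℓ (j : {j // j ∉ J}) : ℓ j ≠ 0 := by
    obtain ⟨v, hv, hv_j⟩ := exists_mem_zeroOn_mul_inv_mulVec_ne_zero horth (by simp) hone
      (isUnit_iff_ne_zero.mpr hΩ.det_pos.ne') (by simpa using hJ) j.2
    intro h0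
    apply hv_j
    simpa [ℓ, hmin.apply_eq_self hΩ.inv hv] using LinearMap.congr_fun h0 v
  have hac : P.map Y ≪ volume := hlaw ▸ withDensity_absolutelyContinuous _ _
  have hae := ae_forall_linearMap_ne_of_absolutelyContinuous hY.aemeasurable hac
    (fun i : {j // j ∉ J} × (Fin n → ℚ) ↦ hℓ i.1) fun i ↦ -ℓ i.1 fun k ↦ (i.2 k : ℝ)
  rw [← measure_univ (μ := P)]
  refine measure_congr (ae_eq_univ.mpr ?_)
  filter_upwards [hae] with ω hω μ
  rw [setOf_mulVec_eq_zero_eq (hmin.mem _) fun j hj h0 ↦ hω (⟨j, hj⟩, μ) ?_,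
    Set.ncard_coe_finset]
  rwa [eq_neg_iff_add_eq_zero, ← map_add]

/-- For Y ~ N(0,Ω) nondegenerate Gaussian in ℝ^{K−1} and |J| < K−1,
    almost surely, simultaneously for all rational shifts μ, the vector
    M·Π_Ω(Y+μ | L_J(Ω)) has exactly |J| zero coordinates. -/
theorem stmt14 (n : ℕ) (hn : 2 ≤ n)
    (B₂ : Matrix (Fin (n+1)) (Fin n) ℝ)
    (horth : B₂ᵀ * B₂ = 1)
    (hone : B₂ᵀ *ᵥ (fun _ => (1:ℝ)) = 0)
    (Ω : Matrix (Fin n) (Fin n) ℝ) (hΩ : Ω.PosDef)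
    (J : Finset (Fin (n+1))) (hJ : J.card < n)
    {E : Type*} [MeasurableSpace E] (P : Measure E) [IsProbabilityMeasure P]
    (Y : E → Fin n → ℝ) (hY : Measurable Y)
    (hlaw : Measure.map Y P = volume.withDensity (fun v =>
        ENNReal.ofReal ((Real.sqrt ((2 * Real.pi) ^ n * Ω.det))⁻¹ *
          Real.exp (-(v ⬝ᵥ (Ω⁻¹ *ᵥ v)) / 2))))
    (proj : (Fin n → ℝ) → Fin n → ℝ)
    (hproj : ∀ v : Fin n → ℝ,
        proj v ∈ {z : Fin n → ℝ | ∀ j ∈ J, ((B₂ * Ω⁻¹) *ᵥ z) j = 0} ∧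
        ∀ z ∈ {z : Fin n → ℝ | ∀ j ∈ J, ((B₂ * Ω⁻¹) *ᵥ z) j = 0},
          (v - proj v) ⬝ᵥ (Ω⁻¹ *ᵥ (v - proj v)) ≤ (v - z) ⬝ᵥ (Ω⁻¹ *ᵥ (v - z))) :
    P {ω : E | ∀ μ : Fin n → ℚ,
        ({j : Fin (n+1) |
            ((B₂ * Ω⁻¹) *ᵥ proj (Y ω + fun i => (μ i : ℝ))) j = 0}).ncard = J.card} = 1 :=
  stmt14_general n B₂ horth hone Ω hΩ J hJ P Y hY hlaw proj hproj
end
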